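/- arXiv:1705.10963 — 2 statements merged into one kernel-verified Lean document; each statement's English description precedes it below -/
import Mathlib

section
/- Spun(d) = {γ·(1 + e_{d+1}e_{d+2}·i(v)) : γ ∈ Spin(d), v ∈ ℝ^d}, and every element of Spun(d) corresponds to a unique pair (γ, v) ∈ Spin(d) × ℝ^d. -/
noncomputable section

open CliffordAlgebra

/-- The negative definite quadratic form `v ↦ -‖v‖²` on `ℝ^n`. -/
def Qn (n : ℕ) : QuadraticForm ℝ (Fin n → ℝ) :=
  QuadraticMap.weightedSumSquares ℝ (fun _ : Fin n => (-1 : ℝ))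

/-- The Clifford algebra `Cl_n = Cl(ℝ^n, -‖·‖²)`, with generators `e_1, …, e_n`
satisfying `e_j² = -1` and `e_je_k = -e_ke_j` for `j ≠ k`. -/
abbrev Cl (n : ℕ) := CliffordAlgebra (Qn n)

/-- The generators `e_1, …, e_n` of `Cl_n` (0-indexed). -/
def gC (n : ℕ) (j : Fin n) : Cl n := CliffordAlgebra.ι (Qn n) (Pi.single j 1)

/-- The conjugate `x̄ = α(t(x))`, where `α` is the grade involution and `t` the reversal. -/
def conjC (n : ℕ) (x : Cl n) : Cl n := reverse (involute x)

/-- The linear embedding `i : ℝ^n → Cl_n`. -/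
def iC (n : ℕ) (v : Fin n → ℝ) : Cl n := CliffordAlgebra.ι (Qn n) v

/-- Products of distinct generators of `Cl_n`, in increasing order of index. -/
def sprodC (n : ℕ) (s : Finset (Fin n)) : Cl n := ((s.sort (· ≤ ·)).map (gC n)).prod

/-- The even part `Cl_n^0`: the span of `1` and the products of an even number of
distinct generators. -/
def ClE0 (n : ℕ) : Submodule ℝ (Cl n) :=
  Submodule.span ℝ {x | ∃ s : Finset (Fin n), Even s.card ∧ x = sprodC n s}

/-- The span of the `m`-terms of `Cl_n`: real multiples of products of `m` distinct
generators. -/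
def mTermsC (n m : ℕ) : Submodule ℝ (Cl n) :=
  Submodule.span ℝ {x | ∃ s : Finset (Fin n), s.card = m ∧ x = sprodC n s}

/-- `Spin(n)` inside `Cl_n`. -/
def SpinC (n : ℕ) : Set (Cl n) :=
  {x | x ∈ ClE0 n ∧ x * conjC n x = 1 ∧
    ∀ v : Fin n → ℝ, ∃ w : Fin n → ℝ, x * iC n v * conjC n x = iC n w}

/-- The coefficient of `1` of an element of `Cl_n` (computed via the normalized trace
of left-multiplication, which agrees with the coefficient of `1` w.r.t. the standard
monomial basis since `dim Cl_n = 2^n`). -/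
def coeff1C (n : ℕ) (x : Cl n) : ℝ :=
  (2 ^ n : ℝ)⁻¹ * LinearMap.trace ℝ (Cl n) (LinearMap.mulLeft ℝ x)

/-- `X_d`, realized as the dual numbers over `Cl_{d+1}`; the dual-number generator `ε`
is central with `ε² = 0` and plays the role of `e_{d+2}`. -/
abbrev Xa (d : ℕ) := DualNumber (Cl (d + 1))

namespace X

variable (d : ℕ)

/-- `e_1, …, e_{d+1}` (0-indexed) inside `X_d`. -/
def e (j : Fin (d + 1)) : Xa d := TrivSqZeroExt.inl (gC (d + 1) j)

/-- `e_{d+2}`. -/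
def eps : Xa d := DualNumber.eps

/-- The generator `e_{d+1}`. -/
def eL : Xa d := e d (Fin.last d)

/-- The embedding of `ℝ^k` into `X_d` using the first `k` generators. -/
def iK (k : ℕ) (v : Fin k → ℝ) : Xa d :=
  TrivSqZeroExt.inl (CliffordAlgebra.ι (Qn (d + 1))
    (fun j : Fin (d + 1) => if h : (j : ℕ) < k then v ⟨j, h⟩ else 0))

/-- `i : ℝ^d → X_d`. -/
def iMap (v : Fin d → ℝ) : Xa d := iK d d v

/-- The conjugate `x̄ = α(t(x))` on `X_d`. -/
def conj (x : Xa d) : Xa d :=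
  TrivSqZeroExt.inl (conjC (d + 1) (TrivSqZeroExt.fst x)) +
    TrivSqZeroExt.inr (conjC (d + 1) (TrivSqZeroExt.snd x))

/-- The norm `N(x) = x·x̄`. -/
def Nm (x : Xa d) : Xa d := x * conj d x

/-- The generating family of `Z_d^0`: `e_1, …, e_d` and `e_{d+1}e_{d+2}`. -/
def zgen (j : Fin (d + 1)) : Xa d := if (j : ℕ) < d then e d j else eL d * eps d

/-- Products of distinct elements of a family, in increasing order of index. -/
def sprod (f : Fin (d + 1) → Xa d) (s : Finset (Fin (d + 1))) : Xa d :=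
  ((s.sort (· ≤ ·)).map f).prod

/-- `Z_d^0`: the span of `1` and the products of an even number of distinct elements
of `{e_1, …, e_d, e_{d+1}e_{d+2}}`. -/
def Z0 : Submodule ℝ (Xa d) :=
  Submodule.span ℝ {x | ∃ s : Finset (Fin (d + 1)), Even s.card ∧ x = sprod d (zgen d) s}

/-- The span of the `m`-terms of `Z_d^0`. -/
def Zterms (m : ℕ) : Submodule ℝ (Xa d) :=
  Submodule.span ℝ {x | ∃ s : Finset (Fin (d + 1)), s.card = m ∧ x = sprod d (zgen d) s}

/-- The even Clifford algebra `Cl_k^0` (for `k ≤ d`), viewed inside `X_d`. -/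
def ClE (k : ℕ) : Submodule ℝ (Xa d) :=
  Submodule.span ℝ {x | ∃ s : Finset (Fin (d + 1)),
    (∀ j ∈ s, (j : ℕ) < k) ∧ Even s.card ∧ x = sprod d (e d) s}

/-- `Spun(d)`. -/
def Spun : Set (Xa d) :=
  {z | z ∈ Z0 d ∧ Nm d z = 1 ∧
    ∀ v : Fin d → ℝ, ∃ w : Fin d → ℝ,
      z * (eps d * iMap d v + eL d) * conj d z = eps d * iMap d w + eL d}

/-- `Spin(k)` (for `k ≤ d`), viewed inside `X_d`. -/
def Spin (k : ℕ) : Set (Xa d) :=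
  {x | x ∈ ClE d k ∧ Nm d x = 1 ∧
    ∀ v : Fin k → ℝ, ∃ w : Fin k → ℝ, x * iK d k v * conj d x = iK d k w}

/-- `T_{ap}`: the elements of `Spun(d)` whose action takes `a` to `p`. -/
def T (a p : Fin d → ℝ) : Set (Xa d) :=
  {x | x ∈ Spun d ∧ x * (eps d * iMap d a + eL d) * conj d x = eps d * iMap d p + eL d}

/-- `F_{ap} = (1 + ½e_{d+1}e_{d+2}i(p))·Cl_d^0·(1 − ½e_{d+1}e_{d+2}i(a))`. -/
def F (a p : Fin d → ℝ) : Set (Xa d) :=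
  (fun y => (1 + (2 : ℝ)⁻¹ • (eL d * eps d * iMap d p)) * y *
      (1 - (2 : ℝ)⁻¹ • (eL d * eps d * iMap d a))) '' (ClE d d : Set (Xa d))

/-- The coefficient of `1` of an element of `X_d`. -/
def c1 (x : Xa d) : ℝ := coeff1C (d + 1) (TrivSqZeroExt.fst x)

/-- The index set for the 2-term coordinates of `Z_d^0`; it has `d(d+1)/2` elements.
A pair `(j,k)` with `k < last` indexes the 2-term `e_{j+1}e_{k+1}`, while a pair
`(j, last)` indexes the 2-term `e_{j+1}e_{d+1}e_{d+2}`. -/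
abbrev Idx := {p : Fin (d + 1) × Fin (d + 1) // p.1 < p.2}

/-- The coefficient of the 2-term indexed by `p`. -/
def c2 (p : Idx d) (x : Xa d) : ℝ :=
  if (p.1.2 : ℕ) < d
  then coeff1C (d + 1) (gC (d + 1) p.1.2 * gC (d + 1) p.1.1 * TrivSqZeroExt.fst x)
  else coeff1C (d + 1) (gC (d + 1) p.1.2 * gC (d + 1) p.1.1 * TrivSqZeroExt.snd x)

/-- The hyperplane `H_0 = {x₁ = 0}` (coefficient of `1` vanishes). -/
def H0 : Set (Xa d) := {x | c1 d x = 0}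

/-- The map `η_d = π' ∘ π`: scale so that the coefficient of `1` is `1`, then keep only
the 2-term coordinates. -/
def eta (x : Xa d) : Idx d → ℝ := fun p => (c1 d x)⁻¹ * c2 d p x

/-- `Spun(d)_+`: elements of `Spun(d)` with positive coefficient of `1`. -/
def SpunP : Set (Xa d) := {x | x ∈ Spun d ∧ 0 < c1 d x}

/-- `L_{ap} = η_d(T_{ap} \ H_0)`. -/
def L (a p : Fin d → ℝ) : Set (Idx d → ℝ) := eta d '' (T d a p \ H0 d)

end X

/-!
`X_d` is realized as the dual numbers over `Cl_{d+1}`, with `ε = e_{d+2}`. An element of `Z_d^0`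
is `z = x + y e_{d+1} ε` with `x` even and `y` odd in the copy of `Cl_d` spanned by products of
`e_1, …, e_d`, so `e_{d+1}` commutes with `x` and anticommutes with `y`. Expanding in `ε`,
`N(z) = 1` says `x x̄ = 1` and `x ȳ = -y x̄`, and then `z` sends `e_{d+1} + ε i(u)` to
`e_{d+1} + ε (x i(u) x̄ - 2 y x̄)`: a rotation by `x` followed by a translation. Hence `x ∈ Spin(d)`
and `y x̄` is a vector; as the rotation is invertible, `y = x i(v)` for a vector `v`, i.e.
`z = x (1 + e_{d+1} e_{d+2} i(-v))`. Both components of `x (1 + e_{d+1} e_{d+2} i(v))` are read off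
directly, which gives uniqueness.
-/

open Submodule
open scoped symmDiff

theorem CliffordAlgebra.ι_injective {R M : Type*} [CommRing R] [AddCommGroup M] [Module R M]
    [Invertible (2 : R)] (Q : QuadraticForm R M) : Function.Injective (ι Q) := fun v w h =>
  (ExteriorAlgebra.ι_inj R v w).1 (by simpa using congrArg (equivExterior Q) h)

theorem Finset.prod_map_sort_insert_of_lt {α M : Type*} [LinearOrder α] [Monoid M] (f : α → M)
    {a : α} {s : Finset α} (h : ∀ x ∈ s, a < x) :
    (((insert a s).sort (· ≤ ·)).map f).prod = f a * ((s.sort (· ≤ ·)).map f).prod := by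
  rw [Finset.sort_insert _ (fun x hx => (h x hx).le) (fun ha => lt_irrefl a (h a ha)),
    List.map_cons, List.prod_cons]

theorem Finset.odd_card_symmDiff_singleton_iff {α : Type*} [DecidableEq α] (s : Finset α)
    (j : α) : Odd (s ∆ {j}).card ↔ Even s.card := by
  by_cases hj : j ∈ s
  · have : s ∆ {j} = s.erase j := by ext x; by_cases x = j <;> simp_all [Finset.mem_symmDiff]
    have hpos := Finset.card_pos.2 ⟨j, hj⟩
    rw [this, Finset.card_erase_of_mem hj]
    grind
  · have : s ∆ {j} = insert j s := by ext x; by_cases x = j <;> simp_all [Finset.mem_symmDiff]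
    rw [this, Finset.card_insert_of_notMem hj]
    grind

theorem Fin.forall_mem_val_lt_iff {d : ℕ} (s : Finset (Fin (d + 1))) :
    (∀ j ∈ s, (j : ℕ) < d) ↔ Fin.last d ∉ s :=
  ⟨fun h hl => (h _ hl).ne rfl, fun h _ hj => Fin.val_lt_last (ne_of_mem_of_not_mem hj h)⟩

theorem Submodule.inv_conj_mem_of_conj_mem {K A : Type*} [Field K] [Ring A] [Algebra K A]
    {V : Submodule K A} [FiniteDimensional K V] {a b : A} (hba : b * a = 1)
    (h : ∀ v ∈ V, a * v * b ∈ V) {v : A} (hv : v ∈ V) : b * v * a ∈ V := by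
  let f : V →ₗ[K] V := (LinearMap.mulLeftRight K (a, b)).restrict h
  have hf : ∀ u, (f u : A) = a * u * b := fun u => rfl
  have hinj : Function.Injective f := fun u u' huu' => Subtype.ext <| by
    simpa [hf, ← mul_assoc, hba, mul_assoc _ b a] using congrArg (fun w : V => b * (w : A) * a) huu'
  obtain ⟨u, hu⟩ := LinearMap.injective_iff_surjective.1 hinj ⟨v, hv⟩
  have hu : a * u * b = v := by rw [← hf, hu]
  rw [← hu, ← mul_assoc, ← mul_assoc, hba, one_mul, mul_assoc, hba, mul_one]
  exact u.2

namespace Cl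

variable {n : ℕ}

theorem Qn_single (j : Fin n) : Qn n (Pi.single j 1) = -1 := by
  simp [Qn, QuadraticMap.weightedSumSquares_apply, Pi.single_apply]

theorem polar_Qn_single {j k : Fin n} (h : j ≠ k) :
    QuadraticMap.polar (Qn n) (Pi.single j 1) (Pi.single k 1) = 0 := by
  simp [Qn, QuadraticMap.polar, QuadraticMap.weightedSumSquares_apply, Pi.single_apply, mul_add,
    Finset.sum_add_distrib, h, h.symm]

theorem gC_mul_self (j : Fin n) : gC n j * gC n j = -1 := by
  rw [gC, ι_sq_scalar, Qn_single, map_neg, map_one]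

theorem gC_mul_gC_of_ne {j k : Fin n} (h : j ≠ k) : gC n j * gC n k = -(gC n k * gC n j) := by
  rw [eq_neg_iff_add_eq_zero, gC, gC, ι_mul_ι_add_swap, polar_Qn_single h, map_zero]

theorem ι_eq_sum_gC (m : Fin n → ℝ) : ι (Qn n) m = ∑ j, m j • gC n j := by
  conv_lhs => rw [← (Pi.basisFun ℝ (Fin n)).sum_repr m]
  simp [gC]

@[simp] theorem sprodC_empty : sprodC n ∅ = 1 := by simp [sprodC]

theorem sprodC_insert {a : Fin n} {s : Finset (Fin n)} (h : ∀ x ∈ s, a < x) :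
    sprodC n (insert a s) = gC n a * sprodC n s :=
  Finset.prod_map_sort_insert_of_lt _ h

theorem sprodC_singleton (j : Fin n) : sprodC n {j} = gC n j := by
  rw [← insert_empty_eq, sprodC_insert (by simp), sprodC_empty, mul_one]

theorem gC_mul_sprodC_mem (j : Fin n) (s : Finset (Fin n)) :
    gC n j * sprodC n s ∈ ℝ ∙ sprodC n ({j} ∆ s) := by
  induction s using Finset.induction_on_min with
  | empty =>
    rw [sprodC_empty, mul_one, ← Finset.bot_eq_empty, symmDiff_bot, sprodC_singleton]
    exact mem_span_singleton_self _
  | insert a s ha ih =>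
    have has : a ∉ s := fun h => lt_irrefl a (ha a h)
    rw [sprodC_insert ha]
    rcases lt_trichotomy j a with hja | rfl | haj
    · have hjs : ∀ x ∈ insert a s, j < x := by
        intro x hx
        rcases Finset.mem_insert.1 hx with rfl | hx
        exacts [hja, hja.trans (ha x hx)]
      have : {j} ∆ insert a s = insert j (insert a s) := by
        have := fun h => lt_irrefl j (hjs j h)
        ext x; by_cases x = j <;> simp_all [Finset.mem_symmDiff]
      rw [this, sprodC_insert hjs, sprodC_insert ha]
      exact mem_span_singleton_self _
    · have : {j} ∆ insert j s = s := by
        ext x; by_cases x = j <;> simp_all [Finset.mem_symmDiff]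
      rw [← mul_assoc, gC_mul_self, neg_one_mul, this]
      exact neg_mem (mem_span_singleton_self _)
    · obtain ⟨c, hc⟩ := mem_span_singleton.1 ih
      have hat : ∀ x ∈ {j} ∆ s, a < x := by
        intro x hx
        rcases Finset.mem_symmDiff.1 hx with ⟨hx, -⟩ | ⟨hx, -⟩
        · rwa [Finset.mem_singleton.1 hx]
        · exact ha x hx
      have : {j} ∆ insert a s = insert a ({j} ∆ s) := by
        ext x; by_cases x = a <;> by_cases x = j <;> simp_all [Finset.mem_symmDiff]
      rw [← mul_assoc, gC_mul_gC_of_ne haj.ne', neg_mul, mul_assoc, ← hc, mul_smul_comm,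
        ← sprodC_insert hat, this]
      exact neg_mem (smul_mem _ _ (mem_span_singleton_self _))

theorem sprodC_mul_gC_mem (s : Finset (Fin n)) (j : Fin n) :
    sprodC n s * gC n j ∈ ℝ ∙ sprodC n (s ∆ {j}) := by
  induction s using Finset.induction_on_min with
  | empty =>
    rw [sprodC_empty, one_mul, ← Finset.bot_eq_empty, bot_symmDiff, sprodC_singleton]
    exact mem_span_singleton_self _
  | insert a s ha ih =>
    obtain ⟨c, hc⟩ := mem_span_singleton.1 ih
    have : insert a s ∆ {j} = {a} ∆ (s ∆ {j}) := by
      have := fun h => lt_irrefl a (ha a h)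
      ext x; by_cases x = a <;> by_cases x = j <;> simp_all [Finset.mem_symmDiff]
    rw [sprodC_insert ha, mul_assoc, ← hc, mul_smul_comm, this]
    exact smul_mem _ _ (gC_mul_sprodC_mem a _)

theorem mul_gC_mem_span {S S' : Set (Finset (Fin n))} {j : Fin n} (h : ∀ s ∈ S, s ∆ {j} ∈ S')
    {x : Cl n} (hx : x ∈ span ℝ (sprodC n '' S)) : x * gC n j ∈ span ℝ (sprodC n '' S') := by
  suffices span ℝ (sprodC n '' S) ≤
      (span ℝ (sprodC n '' S')).comap (LinearMap.mulRight ℝ (gC n j)) from this hx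
  rw [span_le]
  rintro _ ⟨s, hs, rfl⟩
  exact (span_singleton_le_iff_mem _ _).2 (subset_span (Set.mem_image_of_mem _ (h s hs)))
    (sprodC_mul_gC_mem s j)

theorem span_range_sprodC : span ℝ (Set.range (sprodC n)) = ⊤ := by
  refine eq_top_iff'.2 fun x => ?_
  induction x using CliffordAlgebra.right_induction with
  | algebraMap r =>
    rw [Algebra.algebraMap_eq_smul_one, ← sprodC_empty]
    exact smul_mem _ _ (subset_span ⟨∅, rfl⟩)
  | add x y hx hy => exact add_mem hx hy
  | mul_ι m x hx =>
    rw [← Set.image_univ] at hx ⊢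
    rw [ι_eq_sum_gC, Finset.mul_sum]
    refine sum_mem fun j _ => ?_
    rw [mul_smul_comm]
    exact smul_mem _ _ (mul_gC_mem_span (fun _ _ => Set.mem_univ _) hx)

instance : Module.Finite ℝ (Cl n) :=
  ⟨span_range_sprodC ▸ fg_span (Set.finite_range _)⟩

instance : IsDedekindFiniteMonoid (Cl n) :=
  have := IsArtinianRing.of_finite ℝ (Cl n)
  inferInstance

theorem gC_mul_sprodC_of_notMem {j : Fin n} {s : Finset (Fin n)} (h : j ∉ s) :
    gC n j * sprodC n s = (-1 : ℝ) ^ s.card • (sprodC n s * gC n j) := by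
  induction s using Finset.induction_on_min with
  | empty => simp
  | insert a s ha ih =>
    have has : a ∉ s := fun h => lt_irrefl a (ha a h)
    rw [Finset.mem_insert, not_or] at h
    rw [sprodC_insert ha, ← mul_assoc, gC_mul_gC_of_ne h.1, neg_mul, mul_assoc, ih h.2,
      Finset.card_insert_of_notMem has, pow_succ]
    simp [mul_assoc]

theorem gC_mul_eq_smul_mul {S : Set (Finset (Fin n))} {j : Fin n} {c : ℝ}
    (h : ∀ s ∈ S, j ∉ s ∧ (-1 : ℝ) ^ s.card = c) {x : Cl n} (hx : x ∈ span ℝ (sprodC n '' S)) :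
    gC n j * x = c • (x * gC n j) := by
  induction hx using span_induction with
  | mem _ hx =>
    obtain ⟨s, hs, rfl⟩ := hx
    rw [gC_mul_sprodC_of_notMem (h s hs).1, (h s hs).2]
  | zero => simp
  | add x y _ _ hx hy => rw [mul_add, hx, hy, add_mul, smul_add]
  | smul r x _ hx => rw [mul_smul_comm, hx, smul_mul_assoc, smul_comm]

def gLast (d : ℕ) : Cl (d + 1) := gC (d + 1) (Fin.last d)

/- The even and odd parts of the copy of `Cl_d` inside `Cl_{d+1}` spanned by the products of
`e_1, …, e_d`. -/
def evenPart (d : ℕ) : Submodule ℝ (Cl (d + 1)) :=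
  span ℝ (sprodC (d + 1) '' {s | Fin.last d ∉ s ∧ Even s.card})

def oddPart (d : ℕ) : Submodule ℝ (Cl (d + 1)) :=
  span ℝ (sprodC (d + 1) '' {s | Fin.last d ∉ s ∧ Odd s.card})

def vec (d : ℕ) : (Fin d → ℝ) →ₗ[ℝ] Cl (d + 1) where
  toFun v := ι (Qn (d + 1)) fun j => if h : (j : ℕ) < d then v ⟨j, h⟩ else 0
  map_add' v w := by
    rw [← map_add]; congr 1; funext j; by_cases h : (j : ℕ) < d <;> simp [h]
  map_smul' c v := by
    rw [← map_smul]; congr 1; funext j; by_cases h : (j : ℕ) < d <;> simp [h]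

variable {d : ℕ}

theorem gLast_mul_gLast : gLast d * gLast d = -1 := gC_mul_self _

theorem star_gLast : star (gLast d) = -gLast d := star_ι _

theorem star_vec (v : Fin d → ℝ) : star (vec d v) = -vec d v := star_ι _

theorem vec_eq_sum (v : Fin d → ℝ) : vec d v = ∑ j, v j • gC (d + 1) j.castSucc := by
  simp [vec, ι_eq_sum_gC, Fin.sum_univ_castSucc]

theorem vec_injective : Function.Injective (vec d) := fun v w h => funext fun j => by
  simpa using congrFun (CliffordAlgebra.ι_injective _ h) j.castSucc

theorem one_mem_evenPart : (1 : Cl (d + 1)) ∈ evenPart d :=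
  subset_span ⟨∅, by simp, sprodC_empty⟩

theorem mul_vec_mem_oddPart {x : Cl (d + 1)} (hx : x ∈ evenPart d) (v : Fin d → ℝ) :
    x * vec d v ∈ oddPart d := by
  rw [vec_eq_sum, Finset.mul_sum]
  refine sum_mem fun j _ => ?_
  rw [mul_smul_comm]
  refine smul_mem _ _ (mul_gC_mem_span ?_ hx)
  rintro s ⟨hs, he⟩
  refine ⟨?_, (Finset.odd_card_symmDiff_singleton_iff s _).2 he⟩
  simp [Finset.mem_symmDiff, hs, (Fin.castSucc_ne_last j).symm]

theorem vec_mem_oddPart (v : Fin d → ℝ) : vec d v ∈ oddPart d := by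
  simpa using mul_vec_mem_oddPart one_mem_evenPart v

theorem gLast_mul_of_mem_evenPart {x : Cl (d + 1)} (hx : x ∈ evenPart d) :
    gLast d * x = x * gLast d := by
  refine (gC_mul_eq_smul_mul (c := 1) ?_ hx).trans (one_smul _ _)
  rintro s ⟨hs, he⟩
  exact ⟨hs, he.neg_one_pow⟩

theorem gLast_mul_of_mem_oddPart {x : Cl (d + 1)} (hx : x ∈ oddPart d) :
    gLast d * x = -(x * gLast d) := by
  refine (gC_mul_eq_smul_mul (c := -1) ?_ hx).trans (neg_one_smul _ _)
  rintro s ⟨hs, ho⟩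
  exact ⟨hs, ho.neg_one_pow⟩

theorem gLast_mul_vec (v : Fin d → ℝ) : gLast d * vec d v = -(vec d v * gLast d) :=
  gLast_mul_of_mem_oddPart (vec_mem_oddPart v)

end Cl

namespace X

open TrivSqZeroExt Cl

variable {d : ℕ}

theorem eL_mul_eps : eL d * eps d = inr (gLast d) := by
  ext <;> simp [eL, e, eps, gLast]

theorem inl_mul_eL_mul_eps (y : Cl (d + 1)) : inl y * (eL d * eps d) = inr (y * gLast d) := by
  rw [eL_mul_eps, inl_mul_inr, smul_eq_mul]

theorem eps_mul_iMap_add_eL (u : Fin d → ℝ) :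
    eps d * iMap d u + eL d = inl (gLast d) + inr (vec d u) := by
  ext <;> simp [eL, e, eps, gLast, iMap, iK, vec]

theorem one_add_eL_mul_eps_mul_iMap (v : Fin d → ℝ) :
    1 + eL d * eps d * iMap d v = inl 1 + inr (gLast d * vec d v) := by
  ext <;> simp [eL, e, eps, gLast, iMap, iK, vec]

theorem inl_add_inr_inj {x y x' y' : Cl (d + 1)} :
    (inl x + inr y : Xa d) = inl x' + inr y' ↔ x = x' ∧ y = y' := by
  simp [TrivSqZeroExt.ext_iff]

theorem conj_inl_add_inr (x y : Cl (d + 1)) :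
    conj d (inl x + inr y) = inl (star x) + inr (star y) := by
  simp [conj, conjC, star_def]

theorem Nm_inl_add_inr (x y : Cl (d + 1)) :
    Nm d (inl x + inr y) = inl (x * star x) + inr (x * star y + y * star x) := by
  rw [Nm, conj_inl_add_inr]
  ext <;> simp

theorem inl_add_inr_mul_mul_conj (x y p q : Cl (d + 1)) :
    (inl x + inr y : Xa d) * (inl p + inr q) * conj d (inl x + inr y) =
      inl (x * p * star x) + inr (x * p * star y + x * q * star x + y * p * star x) := by
  rw [conj_inl_add_inr]
  ext <;> simp only [fst_add, snd_add, fst_mul, snd_mul, fst_inl, snd_inl, fst_inr, snd_inr,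
    smul_eq_mul, op_smul_eq_mul] <;> noncomm_ring

theorem sprod_insert (f : Fin (d + 1) → Xa d) {a : Fin (d + 1)} {s : Finset (Fin (d + 1))}
    (h : ∀ x ∈ s, a < x) : sprod d f (insert a s) = f a * sprod d f s :=
  Finset.prod_map_sort_insert_of_lt f h

theorem sprod_e (s : Finset (Fin (d + 1))) : sprod d (e d) s = inl (sprodC (d + 1) s) := by
  induction s using Finset.induction_on_min with
  | empty => simp [sprod]
  | insert a s ha ih => rw [sprod_insert _ ha, sprodC_insert ha, ih, e, inl_mul_inl]

theorem sprod_zgen_of_notMem {s : Finset (Fin (d + 1))} (h : Fin.last d ∉ s) :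
    sprod d (zgen d) s = inl (sprodC (d + 1) s) := by
  rw [← sprod_e]
  refine congrArg List.prod (List.map_congr_left fun j hj => ?_)
  have : (j : ℕ) < d := (Fin.forall_mem_val_lt_iff s).2 h j ((s.mem_sort _).1 hj)
  rw [zgen, if_pos this]

theorem sprod_zgen_insert_last {s : Finset (Fin (d + 1))} (h : Fin.last d ∉ s) :
    sprod d (zgen d) (insert (Fin.last d) s) = inl (sprodC (d + 1) s) * (eL d * eps d) := by
  induction s using Finset.induction_on_min with
  | empty => simp [sprod, zgen]
  | insert a s ha ih =>
    rw [Finset.mem_insert, not_or] at h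
    have hlt : ∀ x ∈ insert (Fin.last d) s, a < x := by
      intro x hx
      rcases Finset.mem_insert.1 hx with rfl | hx
      exacts [Fin.lt_last_iff_ne_last.2 (Ne.symm h.1), ha x hx]
    rw [Finset.insert_comm, sprod_insert _ hlt, ih h.2, sprodC_insert ha, zgen,
      if_pos (Fin.val_lt_last (Ne.symm h.1)), e, ← mul_assoc, inl_mul_inl]

theorem ClE_eq_map :
    ClE d d = (evenPart d).map (inlAlgHom ℝ (Cl (d + 1)) (Cl (d + 1))).toLinearMap := by
  rw [ClE, evenPart, map_span, ← Set.image_comp]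
  congr 1
  ext z
  simp [Fin.forall_mem_val_lt_iff, sprod_e, eq_comm, and_assoc]

theorem mem_ClE_iff {γ : Xa d} : γ ∈ ClE d d ↔ ∃ x ∈ evenPart d, γ = inl x := by
  simp [ClE_eq_map, eq_comm]

theorem sprod_zgen_mem_Z0 {s : Finset (Fin (d + 1))} (hs : Even s.card) :
    sprod d (zgen d) s ∈ Z0 d :=
  subset_span ⟨s, hs, rfl⟩

theorem Z0_eq_sup : Z0 d = (evenPart d).map (inlAlgHom ℝ (Cl (d + 1)) (Cl (d + 1))).toLinearMap ⊔
    (oddPart d).map (LinearMap.mulRight ℝ (eL d * eps d) ∘ₗ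
      (inlAlgHom ℝ (Cl (d + 1)) (Cl (d + 1))).toLinearMap) := by
  apply le_antisymm
  · rw [Z0, span_le]
    rintro _ ⟨s, hs, rfl⟩
    by_cases hl : Fin.last d ∈ s
    · rw [← Finset.insert_erase hl, sprod_zgen_insert_last (s.notMem_erase _)]
      refine mem_sup_right (mem_map_of_mem (subset_span ⟨_, ⟨s.notMem_erase _, ?_⟩, rfl⟩))
      rw [Finset.card_erase_of_mem hl]
      exact Nat.Even.sub_odd (Finset.card_pos.2 ⟨_, hl⟩) hs odd_one
    · rw [sprod_zgen_of_notMem hl]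
      exact mem_sup_left (mem_map_of_mem (subset_span ⟨s, ⟨hl, hs⟩, rfl⟩))
  · refine sup_le (map_le_iff_le_comap.2 (span_le.2 ?_)) (map_le_iff_le_comap.2 (span_le.2 ?_))
    · rintro _ ⟨s, ⟨hl, hs⟩, rfl⟩
      have := sprod_zgen_mem_Z0 hs
      rwa [sprod_zgen_of_notMem hl] at this
    · rintro _ ⟨s, ⟨hl, hs⟩, rfl⟩
      have := sprod_zgen_mem_Z0 (s := insert (Fin.last d) s)
        (by rw [Finset.card_insert_of_notMem hl]; exact hs.add_one)
      rwa [sprod_zgen_insert_last hl] at this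

theorem mem_Z0_iff {z : Xa d} :
    z ∈ Z0 d ↔ ∃ x ∈ evenPart d, ∃ y ∈ oddPart d, z = inl x + inr (y * gLast d) := by
  simp only [Z0_eq_sup, mem_sup, mem_map]
  constructor
  · rintro ⟨_, ⟨x, hx, rfl⟩, _, ⟨y, hy, rfl⟩, rfl⟩
    exact ⟨x, hx, y, hy, congrArg (inl x + ·) (inl_mul_eL_mul_eps y)⟩
  · rintro ⟨x, hx, y, hy, rfl⟩
    exact ⟨_, ⟨x, hx, rfl⟩, _, ⟨y, hy, rfl⟩, congrArg (inl x + ·) (inl_mul_eL_mul_eps y)⟩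

theorem conj_inl (x : Cl (d + 1)) : conj d (inl x) = inl (star x) := by
  simp [conj, conjC, star_def]

theorem iK_self (u : Fin d → ℝ) : iK d d u = inl (vec d u) := rfl

theorem mem_spin_iff {γ : Xa d} : γ ∈ Spin d d ↔ ∃ x ∈ evenPart d, γ = inl x ∧
    x * star x = 1 ∧ ∀ u, ∃ w, x * vec d u * star x = vec d w := by
  have hnorm (x : Cl (d + 1)) : Nm d (inl x) = 1 ↔ x * star x = 1 := by
    rw [Nm, conj_inl, inl_mul_inl, ← inl_one, inl_injective.eq_iff]
  have hrot (x : Cl (d + 1)) (u w : Fin d → ℝ) :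
      inl x * iK d d u * conj d (inl x) = iK d d w ↔ x * vec d u * star x = vec d w := by
    rw [conj_inl, iK_self, iK_self, inl_mul_inl, inl_mul_inl, inl_injective.eq_iff]
  simp only [Spin, Set.mem_ofPred_eq, mem_ClE_iff]
  constructor
  · rintro ⟨⟨x, hx, rfl⟩, hN, hrot'⟩
    exact ⟨x, hx, rfl, (hnorm x).1 hN, fun u => (hrot' u).imp fun w => (hrot x u w).1⟩
  · rintro ⟨x, hx, rfl, hN, hrot'⟩
    exact ⟨⟨x, hx, rfl⟩, (hnorm x).2 hN, fun u => (hrot' u).imp fun w => (hrot x u w).2⟩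

theorem inl_add_inr_mem_spun_iff {x y : Cl (d + 1)} (hx : x ∈ evenPart d) (hy : y ∈ oddPart d) :
    inl x + inr (y * gLast d) ∈ Spun d ↔ x * star x = 1 ∧ x * star y = -(y * star x) ∧
      ∀ u, ∃ w, x * vec d u * star x - 2 * (y * star x) = vec d w := by
  have hgx : gLast d * x = x * gLast d := gLast_mul_of_mem_evenPart hx
  have hgx' : gLast d * star x = star x * gLast d := by
    simpa [star_gLast] using (congrArg star hgx).symm
  have hgy' : gLast d * star y = -(star y * gLast d) := by
    simpa [star_gLast, neg_eq_iff_eq_neg] using (congrArg star (gLast_mul_of_mem_oddPart hy)).symm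
  have hnorm : Nm d (inl x + inr (y * gLast d)) = 1 ↔
      x * star x = 1 ∧ x * star y = -(y * star x) := by
    have hsnd : x * star (y * gLast d) + y * gLast d * star x =
        (x * star y + y * star x) * gLast d := by
      rw [star_mul, star_gLast]
      linear_combination (norm := noncomm_ring) -x * hgy' + y * hgx'
    rw [Nm_inl_add_inr, hsnd, show (1 : Xa d) = inl 1 + inr 0 by simp, inl_add_inr_inj,
      ← add_eq_zero_iff_eq_neg]
    refine and_congr_right fun _ => ⟨fun h => ?_, fun h => by rw [h, zero_mul]⟩
    linear_combination (norm := noncomm_ring)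
      -(h * gLast d) + (x * star y + y * star x) * gLast_mul_gLast
  have hact (u : Fin d → ℝ) : (inl x + inr (y * gLast d)) * (inl (gLast d) + inr (vec d u)) *
      conj d (inl x + inr (y * gLast d)) =
        inl (gLast d * (x * star x)) + inr (x * vec d u * star x + (x * star y - y * star x)) := by
    rw [inl_add_inr_mul_mul_conj, star_mul, star_gLast]
    congr 2
    · linear_combination (norm := noncomm_ring) -hgx * star x
    · linear_combination (norm := noncomm_ring)
        -x * gLast_mul_gLast * star y + y * gLast_mul_gLast * star x
  simp only [Spun, Set.mem_ofPred_eq, hnorm, hact, eps_mul_iMap_add_eL, inl_add_inr_inj]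
  constructor
  · rintro ⟨-, ⟨hN, hxy⟩, h⟩
    refine ⟨hN, hxy, fun u => (h u).imp fun w hw => ?_⟩
    rw [hxy] at hw
    linear_combination (norm := noncomm_ring) hw.2
  · rintro ⟨hN, hxy, h⟩
    refine ⟨mem_Z0_iff.2 ⟨x, hx, y, hy, rfl⟩, ⟨hN, hxy⟩, fun u => (h u).imp fun w hw => ?_⟩
    rw [hN, hxy, mul_one]
    exact ⟨rfl, by linear_combination (norm := noncomm_ring) hw⟩

theorem inl_mul_one_add_eL_mul_eps_mul_iMap (x : Cl (d + 1)) (v : Fin d → ℝ) :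
    inl x * (1 + eL d * eps d * iMap d v) = inl x + inr (-(x * vec d v) * gLast d) := by
  rw [one_add_eL_mul_eps_mul_iMap, neg_mul, mul_assoc, ← mul_neg, ← gLast_mul_vec]
  ext <;> simp

theorem spin_mul_mem_spun {γ : Xa d} (hγ : γ ∈ Spin d d) (v : Fin d → ℝ) :
    γ * (1 + eL d * eps d * iMap d v) ∈ Spun d := by
  obtain ⟨x, hx, rfl, hN, hrot⟩ := mem_spin_iff.1 hγ
  rw [inl_mul_one_add_eL_mul_eps_mul_iMap,
    inl_add_inr_mem_spun_iff hx (neg_mem (mul_vec_mem_oddPart hx v))]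
  refine ⟨hN, by simp [star_mul, star_vec, mul_assoc], fun u => ?_⟩
  obtain ⟨w, hw⟩ := hrot (u + (2 : ℝ) • v)
  refine ⟨w, ?_⟩
  rw [← hw, map_add, map_smul, two_smul]
  noncomm_ring

theorem exists_spin_mul_eq_of_mem_spun {z : Xa d} (hz : z ∈ Spun d) :
    ∃ γ ∈ Spin d d, ∃ v, z = γ * (1 + eL d * eps d * iMap d v) := by
  obtain ⟨x, hx, y, hy, rfl⟩ := mem_Z0_iff.1 hz.1
  obtain ⟨hN, -, hact⟩ := (inl_add_inr_mem_spun_iff hx hy).1 hz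
  choose W hW using hact
  have hyx : y * star x = vec d ((-2⁻¹ : ℝ) • W 0) := by
    rw [map_smul, ← hW 0, map_zero, mul_zero, zero_mul, zero_sub, two_mul]
    module
  have hrot (u : Fin d → ℝ) : x * vec d u * star x = vec d (W u - W 0) := by
    rw [map_sub, ← hW u, ← hW 0, map_zero, mul_zero, zero_mul]
    noncomm_ring
  obtain ⟨v, hv⟩ : star x * (y * star x) * x ∈ LinearMap.range (vec d) :=
    inv_conj_mem_of_conj_mem (mul_eq_one_symm hN)
      (by rintro _ ⟨u, rfl⟩; exact ⟨_, (hrot u).symm⟩) ⟨_, hyx.symm⟩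
  refine ⟨inl x, mem_spin_iff.2 ⟨x, hx, rfl, hN, fun u => ⟨_, hrot u⟩⟩, -v, ?_⟩
  rw [inl_mul_one_add_eL_mul_eps_mul_iMap, map_neg, mul_neg, neg_neg, hv, ← mul_assoc,
    ← mul_assoc, hN, one_mul, mul_assoc y, mul_eq_one_symm hN, mul_one]

theorem spin_mul_injective {γ γ' : Xa d} (hγ : γ ∈ Spin d d) (hγ' : γ' ∈ Spin d d)
    {v v' : Fin d → ℝ}
    (h : γ * (1 + eL d * eps d * iMap d v) = γ' * (1 + eL d * eps d * iMap d v')) :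
    γ = γ' ∧ v = v' := by
  obtain ⟨x, -, rfl, hN, -⟩ := mem_spin_iff.1 hγ
  obtain ⟨x', -, rfl, -, -⟩ := mem_spin_iff.1 hγ'
  rw [inl_mul_one_add_eL_mul_eps_mul_iMap, inl_mul_one_add_eL_mul_eps_mul_iMap,
    inl_add_inr_inj] at h
  obtain ⟨rfl, h⟩ := h
  have hN' := mul_eq_one_symm hN
  have key (w : Fin d → ℝ) : vec d w = star x * (-(x * vec d w) * gLast d) * gLast d := by
    linear_combination (norm := noncomm_ring)
      star x * x * vec d w * gLast_mul_gLast - hN' * vec d w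
  exact ⟨rfl, vec_injective (by rw [key v, key v', h])⟩

end X

/-- `Spun(d) = {γ·(1 + e_{d+1}e_{d+2}·i(v)) : γ ∈ Spin(d), v ∈ ℝ^d}`,
and every element of `Spun(d)` corresponds to a unique pair `(γ, v) ∈ Spin(d) × ℝ^d`. -/
theorem spun_eq_spin_translations (d : ℕ) :
    X.Spun d = {x | ∃ γ ∈ X.Spin d d, ∃ v : Fin d → ℝ,
        x = γ * (1 + X.eL d * X.eps d * X.iMap d v)} ∧
    ∀ γ ∈ X.Spin d d, ∀ γ' ∈ X.Spin d d, ∀ v v' : Fin d → ℝ,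
      γ * (1 + X.eL d * X.eps d * X.iMap d v) = γ' * (1 + X.eL d * X.eps d * X.iMap d v') →
        γ = γ' ∧ v = v' := by
  refine ⟨Set.ext fun z => ⟨X.exists_spin_mul_eq_of_mem_spun, ?_⟩,
    fun γ hγ γ' hγ' v v' => X.spin_mul_injective hγ hγ'⟩
  rintro ⟨γ, hγ, v, rfl⟩
  exact X.spin_mul_mem_spun hγ v
end
end

section
/- For a fixed even m ≥ 0, let z ∈ Z_d^0 \ {0} consist entirely of m-terms and let a, p ∈ ℝ^d. Then (1 + ½e_{d+1}e_{d+2}i(p))·z·(1 − ½e_{d+1}e_{d+2}i(a)) lies in the span of the m-terms and (m+2)-terms of Z_d^0, and its m-term component is nonzero. -/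
noncomputable section

open CliffordAlgebra

/-!
Write `P = e_{d+1}e_{d+2}i(p)` and `A = e_{d+1}e_{d+2}i(a)`. Both lie in `e_{d+2}·Cl_{d+1}`, so
`PzA = 0` and the product equals `z + ½Pz − ½zA`. Multiplying a monomial free of `e_{d+1}e_{d+2}`
by `e_{d+1}e_j` (`j ≤ d`) toggles `e_j` and adjoins `e_{d+1}e_{d+2}`, so its size changes by `0`
or `2`; monomials containing `e_{d+1}e_{d+2}` are killed.

For the nonvanishing, `Pz` and `zA` have no `e_{d+2}`-free part, so the `e_{d+2}`-free parts of
the product and of `z` agree. The linear isomorphism `Cl_{d+1} ≃ ⋀ ℝ^{d+1}` sends a product of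
`k` distinct orthogonal generators to a wedge product of degree `k`, so `m`-terms and
`(m+2)`-terms of `Cl_{d+1}` are linearly independent. Hence either the `e_{d+2}`-free part of `z`
vanishes, in which case `Pz = zA = 0` and the product is `z` itself, or it is a nonzero
`m`-term component of the product.
-/

section Clifford

variable {n : ℕ} {j : Fin n} {s : Finset (Fin n)}

lemma Qn_single (j : Fin n) : Qn n (Pi.single j 1) = -1 := by
  simp [Qn, QuadraticMap.weightedSumSquares_apply, Pi.single_apply]

lemma Qn_isOrtho_single {j k : Fin n} (h : j ≠ k) :
    (Qn n).IsOrtho (Pi.single j 1) (Pi.single k 1) := by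
  simp only [QuadraticMap.isOrtho_def, Qn, QuadraticMap.weightedSumSquares_apply,
    ← Finset.sum_add_distrib]
  refine Finset.sum_congr rfl fun i _ => ?_
  by_cases hi : i = j <;> by_cases hk : i = k <;> simp_all

lemma gC_mul_self (j : Fin n) : gC n j * gC n j = -1 := by
  rw [gC, ι_sq_scalar, Qn_single, map_neg, map_one]

lemma gC_mul_gC_of_ne {j k : Fin n} (h : j ≠ k) : gC n j * gC n k = -(gC n k * gC n j) :=
  eq_neg_of_add_eq_zero_left (ι_mul_ι_add_swap_of_isOrtho (Qn_isOrtho_single h))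

lemma ι_eq_sum_smul_gC (v : Fin n → ℝ) : ι (Qn n) v = ∑ j, v j • gC n j := by
  conv_lhs => rw [← Finset.univ_sum_single v]
  rw [map_sum]
  refine Finset.sum_congr rfl fun j _ => ?_
  rw [gC, ← map_smul, ← Pi.single_smul, smul_eq_mul, mul_one]

lemma sprodC_insert_of_lt {a : Fin n} (h : ∀ x ∈ s, a < x) :
    sprodC n (insert a s) = gC n a * sprodC n s := by
  rw [sprodC, Finset.sort_insert _ (fun x hx => (h x hx).le) (fun ha => (h a ha).false),
    List.map_cons, List.prod_cons, sprodC]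

lemma gC_mul_sprodC_of_notMem (hj : j ∉ s) :
    ∃ k : ℕ, gC n j * sprodC n s = (-1 : ℝ) ^ k • sprodC n (insert j s) := by
  induction s using Finset.induction_on_min with
  | empty => exact ⟨0, by simp [sprodC]⟩
  | insert a s has ih =>
    rw [Finset.mem_insert, not_or] at hj
    obtain hja | haj := lt_or_gt_of_ne hj.1
    · refine ⟨0, ?_⟩
      rw [pow_zero, one_smul, sprodC_insert_of_lt has, sprodC_insert_of_lt,
        sprodC_insert_of_lt has]
      exact (Finset.forall_mem_insert _ _ _).2 ⟨hja, fun x hx => hja.trans (has x hx)⟩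
    · obtain ⟨k, hk⟩ := ih hj.2
      refine ⟨k + 1, ?_⟩
      rw [Finset.insert_comm, sprodC_insert_of_lt has, ← mul_assoc, gC_mul_gC_of_ne hj.1,
        neg_mul, mul_assoc, hk, mul_smul_comm, pow_succ, mul_neg_one, neg_smul,
        sprodC_insert_of_lt ((Finset.forall_mem_insert _ _ _).2 ⟨haj, has⟩)]

lemma sprodC_mul_gC_of_notMem (hj : j ∉ s) :
    sprodC n s * gC n j = (-1 : ℝ) ^ s.card • (gC n j * sprodC n s) := by
  induction s using Finset.induction_on_min with
  | empty => simp [sprodC]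
  | insert a s has ih =>
    rw [Finset.mem_insert, not_or] at hj
    rw [sprodC_insert_of_lt has, mul_assoc, ih hj.2, mul_smul_comm, ← mul_assoc,
      gC_mul_gC_of_ne (Ne.symm hj.1), neg_mul, mul_assoc,
      Finset.card_insert_of_notMem (fun ha => (has a ha).false), pow_succ, mul_neg_one, neg_smul,
      smul_neg]

lemma sprodC_eq_gC_mul_sprodC_erase (hj : j ∈ s) :
    ∃ k : ℕ, sprodC n s = (-1 : ℝ) ^ k • (gC n j * sprodC n (s.erase j)) := by
  obtain ⟨k, hk⟩ := gC_mul_sprodC_of_notMem (Finset.notMem_erase j s)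
  refine ⟨k, ?_⟩
  rw [hk, Finset.insert_erase hj, smul_smul, ← pow_add, ← two_mul, pow_mul, neg_one_sq, one_pow,
    one_smul]

variable {x : Cl n}

lemma gC_mul_mem_span_insert (hj : j ∉ s) (hx : x ∈ ℝ ∙ sprodC n s) :
    gC n j * x ∈ ℝ ∙ sprodC n (insert j s) := by
  obtain ⟨r, rfl⟩ := Submodule.mem_span_singleton.1 hx
  obtain ⟨k, hk⟩ := gC_mul_sprodC_of_notMem hj
  rw [mul_smul_comm, hk]
  exact Submodule.smul_mem _ _ (Submodule.smul_mem _ _ (Submodule.mem_span_singleton_self _))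

lemma gC_mul_mem_span_erase (hj : j ∈ s) (hx : x ∈ ℝ ∙ sprodC n s) :
    gC n j * x ∈ ℝ ∙ sprodC n (s.erase j) := by
  obtain ⟨r, rfl⟩ := Submodule.mem_span_singleton.1 hx
  obtain ⟨k, hk⟩ := sprodC_eq_gC_mul_sprodC_erase hj
  rw [mul_smul_comm, hk, mul_smul_comm, ← mul_assoc, gC_mul_self, neg_one_mul]
  exact Submodule.smul_mem _ _ (Submodule.smul_mem _ _
    (neg_mem (Submodule.mem_span_singleton_self _)))

lemma mul_gC_mem_span_insert (hj : j ∉ s) (hx : x ∈ ℝ ∙ sprodC n s) :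
    x * gC n j ∈ ℝ ∙ sprodC n (insert j s) := by
  obtain ⟨r, rfl⟩ := Submodule.mem_span_singleton.1 hx
  rw [smul_mul_assoc, sprodC_mul_gC_of_notMem hj]
  exact Submodule.smul_mem _ _ (Submodule.smul_mem _ _
    (gC_mul_mem_span_insert hj (Submodule.mem_span_singleton_self _)))

lemma mul_gC_mem_span_erase (hj : j ∈ s) (hx : x ∈ ℝ ∙ sprodC n s) :
    x * gC n j ∈ ℝ ∙ sprodC n (s.erase j) := by
  obtain ⟨r, rfl⟩ := Submodule.mem_span_singleton.1 hx
  obtain ⟨k, hk⟩ := sprodC_eq_gC_mul_sprodC_erase hj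
  rw [smul_mul_assoc, hk, smul_mul_assoc, mul_assoc,
    sprodC_mul_gC_of_notMem (Finset.notMem_erase j s), mul_smul_comm, ← mul_assoc, gC_mul_self,
    neg_one_mul]
  exact Submodule.smul_mem _ _ (Submodule.smul_mem _ _ (Submodule.smul_mem _ _
    (neg_mem (Submodule.mem_span_singleton_self _))))

lemma contractLeft_sprodC {f : Module.Dual ℝ (Fin n → ℝ)}
    (hf : ∀ j ∈ s, f (Pi.single j 1) = 0) : contractLeft f (sprodC n s) = 0 := by
  induction s using Finset.induction_on_min with
  | empty => simp [sprodC]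
  | insert a s has ih =>
    rw [Finset.forall_mem_insert] at hf
    rw [sprodC_insert_of_lt has, gC, contractLeft_ι_mul, hf.1, zero_smul, ih hf.2, mul_zero,
      sub_zero]

lemma associated_neg_Qn_single_of_ne {j k : Fin n} (h : j ≠ k) :
    (-Qn n).associated (Pi.single j 1) (Pi.single k 1) = 0 := by
  rw [QuadraticMap.associated_isOrtho, QuadraticMap.isOrtho_def, neg_apply, neg_apply, neg_apply,
    Qn_isOrtho_single h, neg_add]

lemma equivExterior_sprodC_mem (s : Finset (Fin n)) :
    equivExterior (Qn n) (sprodC n s) ∈ ⋀[ℝ]^s.card (Fin n → ℝ) := by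
  induction s using Finset.induction_on_min with
  | empty => simp [sprodC]
  | insert a s has ih =>
    rw [sprodC_insert_of_lt has, equivExterior, changeFormEquiv_apply, gC, changeForm_ι_mul,
      ← changeForm_contractLeft,
      contractLeft_sprodC fun j hj => associated_neg_Qn_single_of_ne (has j hj).ne, map_zero,
      sub_zero, Finset.card_insert_of_notMem (fun ha => (has a ha).false), add_comm]
    exact SetLike.GradedMul.mul_mem (by simp) ih

lemma disjoint_mTermsC {k l : ℕ} (h : k ≠ l) : Disjoint (mTermsC n k) (mTermsC n l) := by
  have hle : ∀ k, mTermsC n k ≤ (⋀[ℝ]^k (Fin n → ℝ)).comap (equivExterior (Qn n)).toLinearMap :=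
    fun k => Submodule.span_le.2 fun _ ⟨s, hs, hx⟩ => hs ▸ hx ▸ equivExterior_sprodC_mem s
  have hdisj : Disjoint (⋀[ℝ]^k (Fin n → ℝ)) (⋀[ℝ]^l (Fin n → ℝ)) :=
    (DirectSum.Decomposition.isInternal fun i => ⋀[ℝ]^i (Fin n → ℝ)
      ).submodule_iSupIndep.pairwiseDisjoint h
  rw [Submodule.disjoint_def] at hdisj ⊢
  intro x hk hl
  exact (equivExterior (Qn n)).map_eq_zero_iff.1 (hdisj _ (hle k hk) (hle l hl))

end Clifford

section DualNumber

open TrivSqZeroExt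

variable {R : Type*} [Semiring R]

lemma inr_mul_eq_inr_mul_fst (b : R) (x : DualNumber R) :
    (inr b : DualNumber R) * x = inr (b * x.fst) := by
  ext <;> simp

lemma mul_inr_eq_inr_fst_mul (x : DualNumber R) (b : R) :
    x * (inr b : DualNumber R) = inr (x.fst * b) := by
  ext <;> simp

end DualNumber

section Zterms

open TrivSqZeroExt

variable {d : ℕ}

lemma one_add_smul_inr_mul_mul_one_sub_smul_inr (c c' : ℝ) (b b' : Cl (d + 1)) (z : Xa d) :
    (1 + c • inr b) * z * (1 - c' • inr b') = z + c • (inr b * z) - c' • (z * inr b') := by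
  simp only [add_mul, mul_sub, one_mul, mul_one, smul_mul_assoc, mul_smul_comm,
    inr_mul_eq_inr_mul_fst, mul_inr_eq_inr_fst_mul, fst_inr, zero_mul, inr_zero, smul_zero,
    add_zero]

lemma eL_mul_eps : X.eL d * X.eps d = inr (gC (d + 1) (Fin.last d)) := by
  rw [X.eL, X.e, X.eps, DualNumber.eps, inl_mul_inr, smul_eq_mul, mul_one]

lemma eL_mul_eps_mul_iMap (v : Fin d → ℝ) :
    X.eL d * X.eps d * X.iMap d v = inr (gC (d + 1) (Fin.last d) * (X.iMap d v).fst) := by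
  rw [eL_mul_eps, inr_mul_eq_inr_mul_fst]

lemma fst_iMap (v : Fin d → ℝ) :
    (X.iMap d v).fst = ∑ i, v i • gC (d + 1) i.castSucc := by
  simp [X.iMap, X.iK, ι_eq_sum_smul_gC, Fin.sum_univ_castSucc]

lemma zgen_eq (j : Fin (d + 1)) :
    X.zgen d j = if j = Fin.last d then inr (gC (d + 1) j) else inl (gC (d + 1) j) := by
  rw [X.zgen]
  by_cases hj : j = Fin.last d
  · simp [hj, eL_mul_eps]
  · simp [hj, Fin.val_lt_last hj, X.e]

lemma sprod_insert_of_lt (f : Fin (d + 1) → Xa d) {a : Fin (d + 1)} {s : Finset (Fin (d + 1))}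
    (h : ∀ x ∈ s, a < x) : X.sprod d f (insert a s) = f a * X.sprod d f s := by
  rw [X.sprod, Finset.sort_insert _ (fun x hx => (h x hx).le) (fun ha => (h a ha).false),
    List.map_cons, List.prod_cons, X.sprod]

lemma sprod_zgen (s : Finset (Fin (d + 1))) :
    X.sprod d (X.zgen d) s =
      if Fin.last d ∈ s then inr (sprodC (d + 1) s) else inl (sprodC (d + 1) s) := by
  induction s using Finset.induction_on_min with
  | empty => simp [X.sprod, sprodC]
  | insert a s has ih =>
    rw [sprod_insert_of_lt _ has, sprodC_insert_of_lt has, ih, zgen_eq]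
    by_cases ha : a = Fin.last d
    · have hs : Fin.last d ∉ s := fun h => (has _ h).ne' ha.symm
      rw [if_pos ha, if_neg hs, ha, if_pos (Finset.mem_insert_self _ _), inr_mul_eq_inr_mul_fst,
        fst_inl]
    · have hmem : Fin.last d ∈ insert a s ↔ Fin.last d ∈ s := by simp [Ne.symm ha]
      rw [if_neg ha]
      by_cases hs : Fin.last d ∈ s
      · rw [if_pos hs, if_pos (hmem.2 hs), inl_mul_inr, smul_eq_mul]
      · rw [if_neg hs, if_neg (mt hmem.1 hs), inl_mul_inl]

lemma mem_mTermsC_of_mem_Zterms {k : ℕ} {x : Xa d} (hx : x ∈ X.Zterms d k) :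
    x.fst ∈ mTermsC (d + 1) k ∧ x.snd ∈ mTermsC (d + 1) k := by
  induction hx using Submodule.span_induction with
  | mem x hx =>
    obtain ⟨s, rfl, rfl⟩ := hx
    have hs : sprodC (d + 1) s ∈ mTermsC (d + 1) s.card := Submodule.subset_span ⟨s, rfl, rfl⟩
    rw [sprod_zgen]
    split_ifs <;> simp [hs]
  | zero => simp
  | add x y _ _ hx hy => exact ⟨add_mem hx.1 hy.1, add_mem hx.2 hy.2⟩
  | smul r x _ hx => exact ⟨Submodule.smul_mem _ r hx.1, Submodule.smul_mem _ r hx.2⟩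

lemma disjoint_Zterms {k l : ℕ} (h : k ≠ l) : Disjoint (X.Zterms d k) (X.Zterms d l) := by
  rw [Submodule.disjoint_def]
  intro x hk hl
  have hd := Submodule.disjoint_def.1 (disjoint_mTermsC (n := d + 1) h)
  exact TrivSqZeroExt.ext
    (hd _ (mem_mTermsC_of_mem_Zterms hk).1 (mem_mTermsC_of_mem_Zterms hl).1)
    (hd _ (mem_mTermsC_of_mem_Zterms hk).2 (mem_mTermsC_of_mem_Zterms hl).2)

lemma inr_mem_Zterms {s : Finset (Fin (d + 1))} {x : Cl (d + 1)} (hs : Fin.last d ∈ s)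
    (hx : x ∈ ℝ ∙ sprodC (d + 1) s) : (inr x : Xa d) ∈ X.Zterms d s.card := by
  obtain ⟨r, rfl⟩ := Submodule.mem_span_singleton.1 hx
  rw [inr_smul]
  exact Submodule.smul_mem _ _ (Submodule.subset_span ⟨s, rfl, by rw [sprod_zgen, if_pos hs]⟩)

variable {t : Finset (Fin (d + 1))} {j : Fin (d + 1)}

lemma inr_gC_last_mul_gC_mul_sprodC_mem (hlast : Fin.last d ∉ t) (hj : j ≠ Fin.last d) :
    (inr (gC (d + 1) (Fin.last d) * gC (d + 1) j * sprodC (d + 1) t) : Xa d)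
      ∈ X.Zterms d t.card ⊔ X.Zterms d (t.card + 2) := by
  have hline := Submodule.mem_span_singleton_self (R := ℝ) (sprodC (d + 1) t)
  rw [mul_assoc]
  by_cases hjt : j ∈ t
  · have hlast' : Fin.last d ∉ t.erase j := fun h => hlast (Finset.mem_of_mem_erase h)
    have hcard : (insert (Fin.last d) (t.erase j)).card = t.card := by
      rw [Finset.card_insert_of_notMem hlast', Finset.card_erase_add_one hjt]
    refine Submodule.mem_sup_left (hcard ▸ inr_mem_Zterms (Finset.mem_insert_self _ _) ?_)
    exact gC_mul_mem_span_insert hlast' (gC_mul_mem_span_erase hjt hline)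
  · have hlast' : Fin.last d ∉ insert j t := by simp [Ne.symm hj, hlast]
    have hcard : (insert (Fin.last d) (insert j t)).card = t.card + 2 := by
      rw [Finset.card_insert_of_notMem hlast', Finset.card_insert_of_notMem hjt]
    refine Submodule.mem_sup_right (hcard ▸ inr_mem_Zterms (Finset.mem_insert_self _ _) ?_)
    exact gC_mul_mem_span_insert hlast' (gC_mul_mem_span_insert hjt hline)

lemma inr_sprodC_mul_gC_last_mul_gC_mem (hlast : Fin.last d ∉ t) (hj : j ≠ Fin.last d) :
    (inr (sprodC (d + 1) t * gC (d + 1) (Fin.last d) * gC (d + 1) j) : Xa d)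
      ∈ X.Zterms d t.card ⊔ X.Zterms d (t.card + 2) := by
  have hline :=
    mul_gC_mem_span_insert hlast (Submodule.mem_span_singleton_self (R := ℝ) (sprodC (d + 1) t))
  by_cases hjt : j ∈ t
  · have hj' : j ∈ insert (Fin.last d) t := Finset.mem_insert_of_mem hjt
    have hcard : ((insert (Fin.last d) t).erase j).card = t.card := by
      rw [Finset.card_erase_of_mem hj', Finset.card_insert_of_notMem hlast, Nat.add_sub_cancel]
    refine Submodule.mem_sup_left (hcard ▸ inr_mem_Zterms ?_ (mul_gC_mem_span_erase hj' hline))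
    exact Finset.mem_erase.2 ⟨Ne.symm hj, Finset.mem_insert_self _ _⟩
  · have hj' : j ∉ insert (Fin.last d) t := by simp [hj, hjt]
    have hcard : (insert j (insert (Fin.last d) t)).card = t.card + 2 := by
      rw [Finset.card_insert_of_notMem hj', Finset.card_insert_of_notMem hlast]
    refine Submodule.mem_sup_right (hcard ▸ inr_mem_Zterms ?_ (mul_gC_mem_span_insert hj' hline))
    exact Finset.mem_insert_of_mem (Finset.mem_insert_self _ _)

lemma eL_mul_eps_mul_iMap_mul_mem {m : ℕ} {z : Xa d} (hz : z ∈ X.Zterms d m) (v : Fin d → ℝ) :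
    X.eL d * X.eps d * X.iMap d v * z ∈ X.Zterms d m ⊔ X.Zterms d (m + 2) := by
  refine (Submodule.span_le (p := (X.Zterms d m ⊔ X.Zterms d (m + 2)).comap
    (LinearMap.mulLeft ℝ _))).2 ?_ hz
  rintro _ ⟨t, rfl, rfl⟩
  rw [SetLike.mem_coe, Submodule.mem_comap, LinearMap.mulLeft_apply, eL_mul_eps_mul_iMap,
    sprod_zgen, inr_mul_eq_inr_mul_fst]
  split_ifs with hlast
  · rw [fst_inr, mul_zero, inr_zero]
    exact zero_mem _
  · rw [fst_inl, fst_iMap, Finset.mul_sum, Finset.sum_mul, inr_sum]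
    refine Submodule.sum_mem _ fun i _ => ?_
    rw [mul_smul_comm, smul_mul_assoc, inr_smul]
    exact Submodule.smul_mem _ _
      (inr_gC_last_mul_gC_mul_sprodC_mem hlast (Fin.castSucc_lt_last i).ne)

lemma mul_eL_mul_eps_mul_iMap_mem {m : ℕ} {z : Xa d} (hz : z ∈ X.Zterms d m) (v : Fin d → ℝ) :
    z * (X.eL d * X.eps d * X.iMap d v) ∈ X.Zterms d m ⊔ X.Zterms d (m + 2) := by
  refine (Submodule.span_le (p := (X.Zterms d m ⊔ X.Zterms d (m + 2)).comap
    (LinearMap.mulRight ℝ _))).2 ?_ hz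
  rintro _ ⟨t, rfl, rfl⟩
  rw [SetLike.mem_coe, Submodule.mem_comap, LinearMap.mulRight_apply, eL_mul_eps_mul_iMap,
    sprod_zgen, mul_inr_eq_inr_fst_mul]
  split_ifs with hlast
  · rw [fst_inr, zero_mul, inr_zero]
    exact zero_mem _
  · rw [fst_inl, fst_iMap, Finset.mul_sum, Finset.mul_sum, inr_sum]
    refine Submodule.sum_mem _ fun i _ => ?_
    rw [mul_smul_comm, mul_smul_comm, inr_smul, ← mul_assoc]
    exact Submodule.smul_mem _ _
      (inr_sprodC_mul_gC_last_mul_gC_mem hlast (Fin.castSucc_lt_last i).ne)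

end Zterms

theorem tau_of_mterms_general (d m : ℕ) (z : Xa d)
    (hz : z ∈ X.Zterms d m) (hz0 : z ≠ 0) (a p : Fin d → ℝ) :
    (1 + (2 : ℝ)⁻¹ • (X.eL d * X.eps d * X.iMap d p)) * z *
        (1 - (2 : ℝ)⁻¹ • (X.eL d * X.eps d * X.iMap d a))
      ∈ X.Zterms d m ⊔ X.Zterms d (m + 2) ∧
    (1 + (2 : ℝ)⁻¹ • (X.eL d * X.eps d * X.iMap d p)) * z *
        (1 - (2 : ℝ)⁻¹ • (X.eL d * X.eps d * X.iMap d a))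
      ∉ X.Zterms d (m + 2) := by
  have hPz := eL_mul_eps_mul_iMap_mul_mem hz p
  have hzA := mul_eL_mul_eps_mul_iMap_mem hz a
  rw [eL_mul_eps_mul_iMap] at hPz hzA ⊢
  rw [eL_mul_eps_mul_iMap, one_add_smul_inr_mul_mul_one_sub_smul_inr]
  refine ⟨sub_mem (add_mem (Submodule.mem_sup_left hz) (Submodule.smul_mem _ _ hPz))
    (Submodule.smul_mem _ _ hzA), fun hmem => hz0 ?_⟩
  rw [inr_mul_eq_inr_mul_fst, mul_inr_eq_inr_fst_mul] at hmem
  have hfst : z.fst = 0 := by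
    refine Submodule.disjoint_def.1 (disjoint_mTermsC (n := d + 1) (by omega : m ≠ m + 2)) _
      (mem_mTermsC_of_mem_Zterms hz).1 ?_
    simpa using (mem_mTermsC_of_mem_Zterms hmem).1
  rw [hfst, mul_zero, zero_mul, TrivSqZeroExt.inr_zero, smul_zero, add_zero, sub_zero] at hmem
  exact Submodule.disjoint_def.1 (disjoint_Zterms (by omega : m ≠ m + 2)) z hz hmem

/-- For a fixed even `m ≥ 0`, let `z ∈ Z_d^0 \ {0}` consist entirely
of `m`-terms and let `a, p ∈ ℝ^d`. Then
`(1 + ½e_{d+1}e_{d+2}i(p))·z·(1 − ½e_{d+1}e_{d+2}i(a))` lies in the span of the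
`m`-terms and `(m+2)`-terms of `Z_d^0`, and its `m`-term component is nonzero (i.e. it
does not lie in the span of the `(m+2)`-terms alone). -/
theorem tau_of_mterms (d m : ℕ) (hm : Even m) (z : Xa d)
    (hz : z ∈ X.Zterms d m) (hz0 : z ≠ 0) (a p : Fin d → ℝ) :
    (1 + (2 : ℝ)⁻¹ • (X.eL d * X.eps d * X.iMap d p)) * z *
        (1 - (2 : ℝ)⁻¹ • (X.eL d * X.eps d * X.iMap d a))
      ∈ X.Zterms d m ⊔ X.Zterms d (m + 2) ∧
    (1 + (2 : ℝ)⁻¹ • (X.eL d * X.eps d * X.iMap d p)) * z *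
        (1 - (2 : ℝ)⁻¹ • (X.eL d * X.eps d * X.iMap d a))
      ∉ X.Zterms d (m + 2) :=
  tau_of_mterms_general d m z hz hz0 a p
end
end
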